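/- Let J(E⁰) be the 3×3 real matrix with rows (r_T·(1 - 2·T⁰/T_max) - d_T, -r_T·T⁰/T_max + q, -(1-η)·β·T⁰), (0, r_I·(1 - T⁰/T_max) - δ, (1-η)·β·T⁰), and (0, (1-ε)·p, -c), i.e. the Jacobian of the HCV vector field at the uninfected equilibrium (T⁰, 0, 0). If R₀ < 1, then every complex eigenvalue of J(E⁰) has negative real part. If R₀ > 1, then J(E⁰) has an eigenvalue with positive real part. -/
import Mathlib


open Set Matrix

lemma quadRootNegRe (p q : ℝ) (hp : 0 < p) (hq : 0 < q) (z : ℂ)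
    (h : z ^ 2 + (p : ℂ) * z + (q : ℂ) = 0) : z.re < 0 := by
  by_contra hre
  push_neg at hre
  have him := congrArg Complex.im h
  have hre' := congrArg Complex.re h
  simp [Complex.add_im, Complex.mul_im, Complex.add_re, Complex.mul_re, pow_two] at him hre'
  have hfac : z.im * (2 * z.re + p) = 0 := by linear_combination him
  rcases mul_eq_zero.mp hfac with h0 | h0
  · nlinarith
  · linarith

lemma quadPosRoot (p q : ℝ) (hq : q < 0) : ∃ x : ℝ, 0 < x ∧ x ^ 2 + p * x + q = 0 := by
  have hnn : (0:ℝ) ≤ p ^ 2 - 4 * q := by nlinarith [sq_nonneg p]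
  have h2 : Real.sqrt (p ^ 2 - 4 * q) ^ 2 = p ^ 2 - 4 * q := Real.sq_sqrt hnn
  refine ⟨(Real.sqrt (p ^ 2 - 4 * q) - p) / 2, ?_, by linear_combination h2 / 4⟩
  have h1 : |p| < Real.sqrt (p ^ 2 - 4 * q) := by
    rw [← Real.sqrt_sq_eq_abs]
    exact Real.sqrt_lt_sqrt (sq_nonneg _) (by linarith)
  have := le_abs_self p
  linarith

/-- The uninfected equilibrium value `T⁰`. -/
noncomputable def hcvT0 (s rT dT Tmax : ℝ) : ℝ :=
  Tmax / (2 * rT) * (rT - dT + Real.sqrt ((rT - dT) ^ 2 + 4 * rT * s / Tmax))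

/-- The basic reproduction number `R₀` (with `1 - θ = (1-ε)(1-η)`). -/
noncomputable def hcvR0 (s rT rI dT dI Tmax β p q c η ε : ℝ) : ℝ :=
  rI / (dI + q) * (1 - hcvT0 s rT dT Tmax / Tmax)
    + (1 - ε) * (1 - η) * β * p * hcvT0 s rT dT Tmax / (c * (dI + q))

/-- Eigenvalues of the Jacobian at the uninfected equilibrium `(T⁰,0,0)`:
all have negative real part when `R₀ < 1`; one has positive real part
when `R₀ > 1`. -/
theorem hcv_uninfected_local_stability
    (s rT rI dT dI Tmax β p q c η ε : ℝ)
    (hs : 0 < s) (hrT : 0 < rT) (hrI : 0 < rI) (hdT : 0 < dT) (hdI : 0 < dI)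
    (hTmax : 0 < Tmax) (hβ : 0 < β) (hp : 0 < p) (hq : 0 < q) (hc : 0 < c)
    (hη : η ∈ Set.Ico (0 : ℝ) 1) (hε : ε ∈ Set.Ico (0 : ℝ) 1)
    (hrIT : rI ≤ rT) (hsT : s ≤ dT * Tmax) (hdTI : dT ≤ dI)
    (J : Matrix (Fin 3) (Fin 3) ℝ)
    (hJ : J = !![rT * (1 - 2 * hcvT0 s rT dT Tmax / Tmax) - dT,
                 -(rT * hcvT0 s rT dT Tmax / Tmax) + q,
                 -((1 - η) * β * hcvT0 s rT dT Tmax);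
                 0,
                 rI * (1 - hcvT0 s rT dT Tmax / Tmax) - (dI + q),
                 (1 - η) * β * hcvT0 s rT dT Tmax;
                 0, (1 - ε) * p, -c]) :
    (hcvR0 s rT rI dT dI Tmax β p q c η ε < 1 →
      ∀ z ∈ spectrum ℂ (J.map (Complex.ofReal)), z.re < 0) ∧
    (1 < hcvR0 s rT rI dT dI Tmax β p q c η ε →
      ∃ z ∈ spectrum ℂ (J.map (Complex.ofReal)), 0 < z.re) := by
  have hη1 : (0:ℝ) < 1 - η := by linarith [hη.2]
  have hε1 : (0:ℝ) < 1 - ε := by linarith [hε.2]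
  have hδ : (0:ℝ) < dI + q := by linarith
  have hΔpos : (0:ℝ) < (rT - dT) ^ 2 + 4 * rT * s / Tmax := by positivity
  have hS : 0 < Real.sqrt ((rT - dT) ^ 2 + 4 * rT * s / Tmax) := Real.sqrt_pos.2 hΔpos
  have hSgt : |rT - dT| < Real.sqrt ((rT - dT) ^ 2 + 4 * rT * s / Tmax) := by
    rw [← Real.sqrt_sq_eq_abs]
    refine Real.sqrt_lt_sqrt (sq_nonneg _) ?_
    have : 0 < 4 * rT * s / Tmax := by positivity
    linarith
  have habs := neg_abs_le (rT - dT)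
  have hT0pos : 0 < hcvT0 s rT dT Tmax := by
    rw [hcvT0]
    apply mul_pos (by positivity)
    linarith
  set K := rT * (1 - 2 * hcvT0 s rT dT Tmax / Tmax) - dT with hK
  set A := rI * (1 - hcvT0 s rT dT Tmax / Tmax) - (dI + q) with hA
  set B := (1 - η) * β * hcvT0 s rT dT Tmax with hB
  set D := (1 - ε) * p with hD
  have hKneg : K < 0 := by
    have : K = -Real.sqrt ((rT - dT) ^ 2 + 4 * rT * s / Tmax) := by
      rw [hK, hcvT0]
      field_simp
      ring
    rw [this]; linarith
  have hBpos : 0 < B := by rw [hB]; exact mul_pos (mul_pos hη1 hβ) hT0pos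
  have hDpos : 0 < D := by rw [hD]; exact mul_pos hε1 hp
  have hkey : -(A * c) - B * D
      = c * (dI + q) * (1 - hcvR0 s rT rI dT dI Tmax β p q c η ε) := by
    rw [hA, hB, hD]
    simp only [hcvR0]
    field_simp
    ring
  have hspec : ∀ z : ℂ, z ∈ spectrum ℂ (J.map Complex.ofReal) ↔
      ((algebraMap ℂ (Matrix (Fin 3) (Fin 3) ℂ) z) - J.map Complex.ofReal).det = 0 := by
    intro z
    rw [spectrum.mem_iff, Matrix.isUnit_iff_isUnit_det, isUnit_iff_ne_zero, not_not]
  have hdet : ∀ z : ℂ, ((algebraMap ℂ (Matrix (Fin 3) (Fin 3) ℂ) z) - J.map Complex.ofReal).det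
      = (z - (K : ℂ)) * ((z - (A : ℂ)) * (z + (c : ℂ)) - (B : ℂ) * (D : ℂ)) := by
    intro z
    subst hJ
    simp [Matrix.det_fin_three, Matrix.algebraMap_matrix_apply, Matrix.vecHead, Matrix.vecTail]
    push_cast
    ring
  constructor
  · intro hR0 z hz
    rw [hspec, hdet, mul_eq_zero] at hz
    rcases hz with h | h
    · rw [sub_eq_zero] at h
      rw [h]
      simpa using hKneg
    · have hq' : 0 < -(A * c) - B * D := by
        rw [hkey]
        apply mul_pos (mul_pos hc hδ)
        linarith
      have hAneg : A < 0 := by nlinarith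
      refine quadRootNegRe (c - A) (-(A * c) - B * D) (by linarith) hq' z ?_
      push_cast
      linear_combination h
  · intro hR0
    have hq' : -(A * c) - B * D < 0 := by
      rw [hkey]
      have h1 : 1 - hcvR0 s rT rI dT dI Tmax β p q c η ε < 0 := by linarith
      nlinarith [mul_pos hc hδ]
    obtain ⟨x, hx, hxeq⟩ := quadPosRoot (c - A) (-(A * c) - B * D) hq'
    refine ⟨(x : ℂ), ?_, by simpa using hx⟩
    rw [hspec, hdet, mul_eq_zero]
    right
    have hxc := congrArg (Complex.ofReal) hxeq
    push_cast at hxc ⊢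
    linear_combination hxc
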